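/- Let F(t,·) be a smooth family of Minkowski norms on ℝ^n satisfying the un-normalized Ricci flow ∂_t log F = −R with R positively 0-homogeneous in y. Then the angular metric h_{ij} := g_{ij} − F^{−2}y_iy_j evolves by ∂_t h_{ij} = 2R·h_{ij} − 2R·g_{ij} − 2Ric_{ij} + 2(Ric_{im}ℓ_j + Ric_{jm}ℓ_i)ℓ^m, where ℓ_i := F^{−1}y_i and ℓ^m := y^m/F. -/

import Mathlib

open scoped BigOperators

noncomputable section

/-- Partial derivative of `f` in the `i`-th coordinate direction. -/
def pd {n : ℕ} (i : Fin n) (f : (Fin n → ℝ) → ℝ) : (Fin n → ℝ) → ℝ :=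
  fun y => fderiv ℝ f y (Pi.single i 1)

/-- Fundamental tensor `g_{ij} = (1/2) ∂²(F²)/∂yⁱ∂yʲ`. -/
def gT {n : ℕ} (F : (Fin n → ℝ) → ℝ) (i j : Fin n) : (Fin n → ℝ) → ℝ :=
  fun y => (1 / 2 : ℝ) * pd i (pd j (fun z => F z ^ 2)) y

/-- The fundamental tensor viewed as a matrix. -/
def gMat {n : ℕ} (F : (Fin n → ℝ) → ℝ) (y : Fin n → ℝ) : Matrix (Fin n) (Fin n) ℝ :=
  Matrix.of fun i j => gT F i j y

/-- Inverse fundamental tensor `g^{ij}`. -/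
def gInv {n : ℕ} (F : (Fin n → ℝ) → ℝ) (i j : Fin n) : (Fin n → ℝ) → ℝ :=
  fun y => (gMat F y)⁻¹ i j

/-- Cartan tensor `C_{ijk} = (1/4) ∂³(F²)/∂yⁱ∂yʲ∂yᵏ`. -/
def cartanT {n : ℕ} (F : (Fin n → ℝ) → ℝ) (i j k : Fin n) : (Fin n → ℝ) → ℝ :=
  fun y => (1 / 4 : ℝ) * pd i (pd j (pd k (fun z => F z ^ 2))) y

/-- `y_i = (1/2) ∂(F²)/∂yⁱ`. -/
def yLow {n : ℕ} (F : (Fin n → ℝ) → ℝ) (i : Fin n) : (Fin n → ℝ) → ℝ :=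
  fun y => (1 / 2 : ℝ) * pd i (fun z => F z ^ 2) y

/-- Mean Cartan torsion `I_i = g^{jk} C_{ijk}`. -/
def mC {n : ℕ} (F : (Fin n → ℝ) → ℝ) (i : Fin n) : (Fin n → ℝ) → ℝ :=
  fun y => ∑ j, ∑ k, gInv F j k y * cartanT F i j k y

/-- Raised mean Cartan torsion `I^i = g^{ij} I_j`. -/
def mCUp {n : ℕ} (F : (Fin n → ℝ) → ℝ) (i : Fin n) : (Fin n → ℝ) → ℝ :=
  fun y => ∑ j, gInv F i j y * mC F j y

/-- `‖I‖² = I_i I^i`. -/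
def normI2 {n : ℕ} (F : (Fin n → ℝ) → ℝ) : (Fin n → ℝ) → ℝ :=
  fun y => ∑ i, mC F i y * mCUp F i y

/-- Angular metric `h_{ij} = g_{ij} − F⁻² y_i y_j`. -/
def angular {n : ℕ} (F : (Fin n → ℝ) → ℝ) (i j : Fin n) : (Fin n → ℝ) → ℝ :=
  fun y => gT F i j y - yLow F i y * yLow F j y / F y ^ 2

/-- `Ric_{ij} = (1/2) ∂²(R F²)/∂yⁱ∂yʲ`. -/
def RicT {n : ℕ} (F R : (Fin n → ℝ) → ℝ) (i j : Fin n) : (Fin n → ℝ) → ℝ :=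
  fun y => (1 / 2 : ℝ) * pd i (pd j (fun z => R z * F z ^ 2)) y

/-- `Ric^{ij} = g^{ik} g^{jl} Ric_{kl}`. -/
def RicUp {n : ℕ} (F R : (Fin n → ℝ) → ℝ) (i j : Fin n) : (Fin n → ℝ) → ℝ :=
  fun y => ∑ k, ∑ l, gInv F i k y * gInv F j l y * RicT F R k l y

/-- `ρ = g^{jk} Ric_{jk}`. -/
def rho {n : ℕ} (F R : (Fin n → ℝ) → ℝ) : (Fin n → ℝ) → ℝ :=
  fun y => ∑ j, ∑ k, gInv F j k y * RicT F R j k y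

/-- `ρ^i = g^{ij} ρ_j`. -/
def rhoUp {n : ℕ} (F R : (Fin n → ℝ) → ℝ) (i : Fin n) : (Fin n → ℝ) → ℝ :=
  fun y => ∑ j, gInv F i j y * pd j (rho F R) y

/-- A Minkowski norm on ℝⁿ: smooth away from `0`, positive, positively
1-homogeneous, with positive-definite fundamental tensor. -/
def IsMinkowski {n : ℕ} (F : (Fin n → ℝ) → ℝ) : Prop :=
  ContDiffOn ℝ (⊤ : ℕ∞) F {y : Fin n → ℝ | y ≠ 0} ∧
  (∀ y : Fin n → ℝ, y ≠ 0 → 0 < F y) ∧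
  (∀ y : Fin n → ℝ, y ≠ 0 → ∀ lam : ℝ, 0 < lam → F (lam • y) = lam * F y) ∧
  (∀ y : Fin n → ℝ, y ≠ 0 → ∀ v : Fin n → ℝ, v ≠ 0 →
    0 < ∑ i, ∑ j, gT F i j y * v i * v j)

/-- An (α,β)-Minkowski norm: `F = α · φ(β/α)` with `α` a Riemannian (Euclidean)
norm, `β` a linear form, and `φ` smooth and positive on an open interval
containing the range of `β/α`. -/
def IsAlphaBeta {n : ℕ} (F : (Fin n → ℝ) → ℝ) : Prop :=
  ∃ (a : Matrix (Fin n) (Fin n) ℝ) (b : Fin n → ℝ) (φ : ℝ → ℝ) (s : Set ℝ),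
    a.IsSymm ∧
    (∀ v : Fin n → ℝ, v ≠ 0 → 0 < ∑ i, ∑ j, a i j * v i * v j) ∧
    IsOpen s ∧ ContDiffOn ℝ (⊤ : ℕ∞) φ s ∧ (∀ x ∈ s, 0 < φ x) ∧
    (∀ y : Fin n → ℝ, y ≠ 0 →
      (∑ i, b i * y i) / Real.sqrt (∑ i, ∑ j, a i j * y i * y j) ∈ s ∧
      F y = Real.sqrt (∑ i, ∑ j, a i j * y i * y j) *
        φ ((∑ i, b i * y i) / Real.sqrt (∑ i, ∑ j, a i j * y i * y j)))

/-- Semi-C-reducibility of a Minkowski norm, with scalar functions `p`, `q`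
satisfying `p + q = 1`; in particular the mean Cartan torsion is nowhere zero. -/
def IsSemiCReducible {n : ℕ} (F p q : (Fin n → ℝ) → ℝ) : Prop :=
  (∀ y : Fin n → ℝ, y ≠ 0 → ∃ i, mC F i y ≠ 0) ∧
  (∀ y : Fin n → ℝ, y ≠ 0 → p y + q y = 1) ∧
  (∀ y : Fin n → ℝ, y ≠ 0 → ∀ i j k : Fin n,
    cartanT F i j k y =
      (p y / ((n : ℝ) + 1)) *
        (angular F i j y * mC F k y + angular F j k y * mC F i y +
          angular F k i y * mC F j y) +
      (q y / normI2 F y) * (mC F i y * mC F j y * mC F k y))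

/-- A smooth family, over `t ∈ J`, of functions on `ℝⁿ ∖ {0}`. -/
def SmoothFamily {n : ℕ} (J : Set ℝ) (F : ℝ → (Fin n → ℝ) → ℝ) : Prop :=
  ContDiffOn ℝ (⊤ : ℕ∞) (fun p : ℝ × (Fin n → ℝ) => F p.1 p.2)
    (J ×ˢ {y : Fin n → ℝ | y ≠ 0})



theorem two_le_inf : (2 : WithTop ℕ∞) ≤ ((⊤:ℕ∞) : WithTop ℕ∞) :=
  WithTop.coe_le_coe.2 (by simp) |>.trans_eq' (by norm_cast)

theorem one_le_inf : (1 : WithTop ℕ∞) ≤ ((⊤:ℕ∞) : WithTop ℕ∞) :=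
  WithTop.coe_le_coe.2 (by simp) |>.trans_eq' (by norm_cast)
section DvLemmas
variable {E : Type*} [NormedAddCommGroup E] [NormedSpace ℝ E]

def Dv (v : E) (f : E → ℝ) : E → ℝ := fun x => fderiv ℝ f x v

theorem Dv_contDiffOn {U : Set E} (hU : IsOpen U) {f : E → ℝ}
    (hf : ContDiffOn ℝ (⊤ : ℕ∞) f U) (v : E) : ContDiffOn ℝ (⊤ : ℕ∞) (Dv v f) U := by
  have h1 : ContDiffOn ℝ (⊤ : ℕ∞) (fderiv ℝ f) U := hf.fderiv_of_isOpen hU (by norm_num)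
  exact (ContinuousLinearMap.apply ℝ ℝ v).contDiff.comp_contDiffOn h1

theorem diffAt_of_contDiffOn {U : Set E} (hU : IsOpen U) {f : E → ℝ}
    (hf : ContDiffOn ℝ (⊤ : ℕ∞) f U) {x : E} (hx : x ∈ U) :
    DifferentiableAt ℝ f x :=
  (hf.contDiffAt (hU.mem_nhds hx)).differentiableAt (by simp)

theorem Dv_diffAt {U : Set E} (hU : IsOpen U) {f : E → ℝ}
    (hf : ContDiffOn ℝ (⊤ : ℕ∞) f U) (v : E) {x : E} (hx : x ∈ U) :
    DifferentiableAt ℝ (Dv v f) x :=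
  diffAt_of_contDiffOn hU (Dv_contDiffOn hU hf v) hx

theorem Dv_congr {U : Set E} (hU : IsOpen U) {f g : E → ℝ} (h : ∀ x ∈ U, f x = g x)
    {x : E} (hx : x ∈ U) (v : E) : Dv v f x = Dv v g x := by
  have : f =ᶠ[nhds x] g := by
    filter_upwards [hU.mem_nhds hx] with z hz using h z hz
  simp only [Dv, this.fderiv_eq]

theorem Dv_comm {U : Set E} (hU : IsOpen U) {f : E → ℝ}
    (hf : ContDiffOn ℝ (⊤ : ℕ∞) f U) {x : E} (hx : x ∈ U) (v w : E) :
    Dv v (Dv w f) x = Dv w (Dv v f) x := by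
  have hfa : ContDiffAt ℝ (⊤ : ℕ∞) f x := hf.contDiffAt (hU.mem_nhds hx)
  have hsym : IsSymmSndFDerivAt ℝ f x := hfa.isSymmSndFDerivAt (by rw [minSmoothness_of_isRCLikeNormedField]; exact two_le_inf)
  have hdf : DifferentiableAt ℝ (fderiv ℝ f) x := by
    have := (hf.fderiv_of_isOpen hU (m := (⊤:ℕ∞)) (by norm_num)).contDiffAt (hU.mem_nhds hx)
    exact this.differentiableAt (by simp)
  have h1 : ∀ a b : E, Dv b (Dv a f) x = fderiv ℝ (fderiv ℝ f) x b a := by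
    intro a b
    have hcomp : HasFDerivAt (fun y => (ContinuousLinearMap.apply ℝ ℝ a) (fderiv ℝ f y))
        ((ContinuousLinearMap.apply ℝ ℝ a).comp (fderiv ℝ (fderiv ℝ f) x)) x :=
      ((ContinuousLinearMap.apply ℝ ℝ a).hasFDerivAt).comp x hdf.hasFDerivAt
    show fderiv ℝ (Dv a f) x b = _
    rw [show (Dv a f) = (fun y => (ContinuousLinearMap.apply ℝ ℝ a) (fderiv ℝ f y)) from rfl,
      hcomp.fderiv]
    rfl
  rw [h1 w v, h1 v w, hsym.eq v w]

theorem Dv_const_mul {f : E → ℝ} {x : E} (hf : DifferentiableAt ℝ f x) (c : ℝ) (v : E) :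
    Dv v (fun y => c * f y) x = c * Dv v f x := by
  simp only [Dv, fderiv_const_mul hf c]; rfl

end DvLemmas

section Slice
variable {n : ℕ}

theorem slice_hasDerivAt {G : ℝ × (Fin n → ℝ) → ℝ} {t : ℝ} {y : Fin n → ℝ}
    (hG : DifferentiableAt ℝ G (t, y)) :
    HasDerivAt (fun s => G (s, y)) (Dv ((1:ℝ), (0 : Fin n → ℝ)) G (t, y)) t := by
  have hι : HasDerivAt (fun s : ℝ => ((s : ℝ), y)) (((1:ℝ), (0 : Fin n → ℝ))) t :=
    (hasDerivAt_id t).prodMk (hasDerivAt_const t y)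
  exact hG.hasFDerivAt.comp_hasDerivAt t hι

theorem pd_slice {G : ℝ × (Fin n → ℝ) → ℝ} {t : ℝ} {y : Fin n → ℝ}
    (hG : DifferentiableAt ℝ G (t, y)) (i : Fin n) :
    pd i (fun z => G (t, z)) y = Dv ((0:ℝ), Pi.single i 1) G (t, y) := by
  have hι : HasFDerivAt (fun z : Fin n → ℝ => ((t : ℝ), z))
      ((0 : (Fin n → ℝ) →L[ℝ] ℝ).prod (ContinuousLinearMap.id ℝ (Fin n → ℝ))) y :=
    (hasFDerivAt_const t y).prodMk (hasFDerivAt_id y)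
  have h2 := (hG.hasFDerivAt.comp y hι).fderiv
  show fderiv ℝ (fun z => G (t, z)) y (Pi.single i 1) = _
  rw [show (fun z : Fin n → ℝ => G (t, z)) = (G ∘ fun z : Fin n → ℝ => ((t:ℝ), z)) from rfl, h2]
  rfl

theorem pd_pd_slice {U : Set (ℝ × (Fin n → ℝ))} (hU : IsOpen U)
    {G : ℝ × (Fin n → ℝ) → ℝ} (hG : ContDiffOn ℝ (⊤:ℕ∞) G U)
    {t : ℝ} {y : Fin n → ℝ} (hty : (t, y) ∈ U) (i j : Fin n) :
    pd i (pd j (fun z => G (t, z))) y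
      = Dv ((0:ℝ), Pi.single i 1) (Dv ((0:ℝ), Pi.single j 1) G) (t, y) := by
  have hVo : IsOpen {z : Fin n → ℝ | (t, z) ∈ U} :=
    hU.preimage (continuous_const.prodMk continuous_id)
  have h1 : ∀ z ∈ {z : Fin n → ℝ | (t, z) ∈ U},
      pd j (fun z' => G (t, z')) z = Dv ((0:ℝ), Pi.single j 1) G (t, z) :=
    fun z hz => pd_slice (diffAt_of_contDiffOn hU hG hz) j
  have h2 : pd i (pd j (fun z' => G (t, z'))) y
      = pd i (fun z => Dv ((0:ℝ), Pi.single j 1) G (t, z)) y :=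
    Dv_congr hVo h1 hty (Pi.single i 1)
  rw [h2, pd_slice (Dv_diffAt hU hG _ hty) i]

theorem euler_aux {h : (Fin n → ℝ) → ℝ}
    (hh : ContDiffOn ℝ (⊤:ℕ∞) h {z : Fin n → ℝ | z ≠ 0})
    (hom2 : ∀ z : Fin n → ℝ, z ≠ 0 → ∀ c : ℝ, 0 < c → h (c • z) = c ^ 2 * h z)
    {y : Fin n → ℝ} (hy : y ≠ 0) (i : Fin n) :
    ∑ m, pd m (pd i h) y * y m = pd i h y := by
  have hVo : IsOpen {z : Fin n → ℝ | z ≠ 0} := isOpen_ne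
  have hdiff : ∀ z : Fin n → ℝ, z ≠ 0 → DifferentiableAt ℝ h z :=
    fun z hz => diffAt_of_contDiffOn hVo hh hz
  have hom1 : ∀ z : Fin n → ℝ, z ≠ 0 → ∀ c : ℝ, 0 < c → pd i h (c • z) = c * pd i h z := by
    intro z hz c hc
    have hcz : c • z ≠ 0 := smul_ne_zero hc.ne' hz
    have h1 : HasFDerivAt (fun x => h (c • x))
        ((fderiv ℝ h (c • z)).comp (c • ContinuousLinearMap.id ℝ (Fin n → ℝ))) z :=
      (hdiff _ hcz).hasFDerivAt.comp z ((hasFDerivAt_id z).const_smul c)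
    have h2 : HasFDerivAt (fun x => c ^ 2 * h x) ((c ^ 2) • fderiv ℝ h z) z :=
      (hdiff z hz).hasFDerivAt.const_mul (c ^ 2)
    have heq : (fun x => h (c • x)) =ᶠ[nhds z] (fun x => c ^ 2 * h x) := by
      filter_upwards [hVo.mem_nhds hz] with x hx using hom2 x hx c hc
    have h7 : ((fderiv ℝ h (c • z)).comp (c • ContinuousLinearMap.id ℝ (Fin n → ℝ)))
        (Pi.single i 1) = ((c ^ 2) • fderiv ℝ h z) (Pi.single i 1) := by
      rw [← h1.fderiv, ← h2.fderiv, heq.fderiv_eq]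
    simp only [ContinuousLinearMap.comp_apply, ContinuousLinearMap.smul_apply,
      ContinuousLinearMap.coe_smul', Pi.smul_apply, ContinuousLinearMap.coe_id', id_eq,
      map_smul, smul_eq_mul] at h7
    have h8 : c * pd i h (c • z) = c * (c * pd i h z) := by
      show c * fderiv ℝ h (c • z) (Pi.single i 1) = _
      rw [h7]
      show c ^ 2 * (fderiv ℝ h z) (Pi.single i 1) = c * (c * (fderiv ℝ h z) (Pi.single i 1))
      ring
    exact mul_left_cancel₀ hc.ne' h8
  have hgd : DifferentiableAt ℝ (pd i h) y := Dv_diffAt hVo hh (Pi.single i 1) hy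
  have hs' : HasDerivAt (fun c : ℝ => c • y) y 1 := by
    simpa using (hasDerivAt_id (1:ℝ)).smul_const y
  have h1' : HasFDerivAt (pd i h) (fderiv ℝ (pd i h) y) ((1:ℝ) • y) := by
    rw [one_smul]; exact hgd.hasFDerivAt
  have hder : HasDerivAt (fun c : ℝ => pd i h (c • y)) (fderiv ℝ (pd i h) y y) 1 :=
    h1'.comp_hasDerivAt (l := pd i h) (f := fun c : ℝ => c • y) 1 hs'
  have hev2 : (fun c : ℝ => pd i h (c • y)) =ᶠ[nhds 1] (fun c => c * pd i h y) := by
    filter_upwards [isOpen_Ioi.mem_nhds (Set.mem_Ioi.2 zero_lt_one)] with c hc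
    exact hom1 y hy c hc
  have hlin : HasDerivAt (fun c : ℝ => c * pd i h y) (pd i h y) 1 := by
    simpa using (hasDerivAt_id (1:ℝ)).mul_const (pd i h y)
  have heuler : fderiv ℝ (pd i h) y y = pd i h y := by
    rw [← hder.deriv, hev2.deriv_eq, hlin.deriv]
  have hdecomp : (∑ m, (y m) • (Pi.single m (1:ℝ) : Fin n → ℝ)) = y := by
    have hterm : ∀ m : Fin n, (y m) • (Pi.single m (1:ℝ) : Fin n → ℝ) = Pi.single m (y m) := by
      intro m; rw [← Pi.single_smul, smul_eq_mul, mul_one]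
    rw [Finset.sum_congr rfl (fun m _ => hterm m), Finset.univ_sum_single]
  have h8 : fderiv ℝ (pd i h) y (∑ m, (y m) • (Pi.single m (1:ℝ) : Fin n → ℝ))
      = ∑ m, y m * pd m (pd i h) y := by
    rw [map_sum]
    exact Finset.sum_congr rfl fun m _ => by rw [map_smul]; rfl
  calc ∑ m, pd m (pd i h) y * y m = ∑ m, y m * pd m (pd i h) y := by
        exact Finset.sum_congr rfl fun m _ => mul_comm _ _
    _ = fderiv ℝ (pd i h) y (∑ m, (y m) • (Pi.single m (1:ℝ) : Fin n → ℝ)) := h8.symm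
    _ = fderiv ℝ (pd i h) y y := by rw [hdecomp]
    _ = pd i h y := heuler

end Slice

def uu {n : ℕ} (F : ℝ → (Fin n → ℝ) → ℝ) : ℝ × (Fin n → ℝ) → ℝ :=
  fun p => F p.1 p.2 ^ 2

def ww {n : ℕ} (F R : ℝ → (Fin n → ℝ) → ℝ) : ℝ × (Fin n → ℝ) → ℝ :=
  fun p => R p.1 p.2 * F p.1 p.2 ^ 2


theorem angular_metric_evolution
    {n : ℕ} (a b : ℝ) (F R : ℝ → (Fin n → ℝ) → ℝ)
    (hF : SmoothFamily (Set.Ioo a b) F)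
    (hMink : ∀ t ∈ Set.Ioo a b, IsMinkowski (F t))
    (hR : SmoothFamily (Set.Ioo a b) R)
    (hRhom : ∀ t ∈ Set.Ioo a b, ∀ y : Fin n → ℝ, y ≠ 0 →
      ∀ lam : ℝ, 0 < lam → R t (lam • y) = R t y)
    (hflow : ∀ t ∈ Set.Ioo a b, ∀ y : Fin n → ℝ, y ≠ 0 →
      deriv (fun s => Real.log (F s y)) t = - R t y)
    :
    ∀ t ∈ Set.Ioo a b, ∀ y : Fin n → ℝ, y ≠ 0 → ∀ i j : Fin n,
      deriv (fun s => angular (F s) i j y) t =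
        2 * R t y * angular (F t) i j y - 2 * R t y * gT (F t) i j y
          - 2 * RicT (F t) (R t) i j y
          + 2 * ∑ m, (RicT (F t) (R t) i m y * (yLow (F t) j y / F t y)
              + RicT (F t) (R t) j m y * (yLow (F t) i y / F t y)) * (y m / F t y) := by

  intro t ht y hy i j
  classical
  have hUo : IsOpen ((Set.Ioo a b) ×ˢ {y : Fin n → ℝ | y ≠ 0}) := isOpen_Ioo.prod isOpen_ne
  have hp : (t, y) ∈ (Set.Ioo a b) ×ˢ {y : Fin n → ℝ | y ≠ 0} := Set.mem_prod.2 ⟨ht, hy⟩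
  have hF' : ContDiffOn ℝ (⊤:ℕ∞) (fun p : ℝ × (Fin n → ℝ) => F p.1 p.2)
      ((Set.Ioo a b) ×ˢ {y : Fin n → ℝ | y ≠ 0}) := hF.of_le (by simp)
  have hR' : ContDiffOn ℝ (⊤:ℕ∞) (fun p : ℝ × (Fin n → ℝ) => R p.1 p.2)
      ((Set.Ioo a b) ×ˢ {y : Fin n → ℝ | y ≠ 0}) := hR.of_le (by simp)
  have hu : ContDiffOn ℝ (⊤:ℕ∞) (uu F) ((Set.Ioo a b) ×ˢ {y : Fin n → ℝ | y ≠ 0}) := hF'.pow 2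
  have hw : ContDiffOn ℝ (⊤:ℕ∞) (ww F R) ((Set.Ioo a b) ×ˢ {y : Fin n → ℝ | y ≠ 0}) :=
    hR'.mul (hF'.pow 2)
  -- the flow equation for u = F²
  have hkey : ∀ p ∈ (Set.Ioo a b) ×ˢ {y : Fin n → ℝ | y ≠ 0},
      Dv ((1:ℝ), (0 : Fin n → ℝ)) (uu F) p = -2 * ww F R p := by
    rintro ⟨t', y'⟩ hp'
    have ht' : t' ∈ Set.Ioo a b := hp'.1
    have hy' : y' ≠ 0 := hp'.2
    have hdF : DifferentiableAt ℝ (fun p : ℝ × (Fin n → ℝ) => F p.1 p.2) (t', y') :=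
      diffAt_of_contDiffOn hUo hF' hp'
    have hdu : DifferentiableAt ℝ (uu F) (t', y') := diffAt_of_contDiffOn hUo hu hp'
    have hpos : 0 < F t' y' := (hMink t' ht').2.1 y' hy'
    obtain ⟨d, hd⟩ : ∃ d, HasDerivAt (fun s => F s y') d t' := ⟨_, slice_hasDerivAt hdF⟩
    have hlog : HasDerivAt (fun s => Real.log (F s y')) (d / F t' y') t' := hd.log hpos.ne'
    have h2 : d / F t' y' = - R t' y' := by
      rw [← hlog.deriv]; exact hflow t' ht' y' hy'
    have h3 : d = - R t' y' * F t' y' := by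
      field_simp at h2; linarith
    have hu3 : HasDerivAt (fun s => F s y' ^ 2) (((2:ℕ) : ℝ) * F t' y' ^ (2 - 1) * d) t' :=
      hd.pow 2
    have hu2 : HasDerivAt (fun s => F s y' ^ 2)
        (Dv ((1:ℝ), (0 : Fin n → ℝ)) (uu F) (t', y')) t' := slice_hasDerivAt hdu
    have h4 := hu2.unique hu3
    rw [h4, h3]
    show ((2:ℕ) : ℝ) * F t' y' ^ (2 - 1) * (- R t' y' * F t' y') = -2 * (R t' y' * F t' y' ^ 2)
    push_cast
    ring
  -- first-order time-derivative swap
  have hDt1 : ∀ q ∈ (Set.Ioo a b) ×ˢ {y : Fin n → ℝ | y ≠ 0}, ∀ k : Fin n,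
      Dv ((1:ℝ), (0 : Fin n → ℝ)) (Dv ((0:ℝ), Pi.single k 1) (uu F)) q
        = -2 * Dv ((0:ℝ), Pi.single k 1) (ww F R) q := by
    intro q hq k
    have s1 : Dv ((1:ℝ), (0 : Fin n → ℝ)) (Dv ((0:ℝ), Pi.single k 1) (uu F)) q
        = Dv ((0:ℝ), Pi.single k 1) (Dv ((1:ℝ), (0 : Fin n → ℝ)) (uu F)) q :=
      Dv_comm hUo hu hq _ _
    have s2 : Dv ((0:ℝ), Pi.single k 1) (Dv ((1:ℝ), (0 : Fin n → ℝ)) (uu F)) q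
        = Dv ((0:ℝ), Pi.single k 1) (fun r => -2 * ww F R r) q :=
      Dv_congr hUo hkey hq _
    have s3 : Dv ((0:ℝ), Pi.single k 1) (fun r => -2 * ww F R r) q
        = -2 * Dv ((0:ℝ), Pi.single k 1) (ww F R) q :=
      Dv_const_mul (diffAt_of_contDiffOn hUo hw hq) _ _
    exact s1.trans (s2.trans s3)
  -- second-order time-derivative swap
  have hDt2 : Dv ((1:ℝ), (0 : Fin n → ℝ))
      (Dv ((0:ℝ), Pi.single i 1) (Dv ((0:ℝ), Pi.single j 1) (uu F))) (t, y)
        = -2 * Dv ((0:ℝ), Pi.single i 1) (Dv ((0:ℝ), Pi.single j 1) (ww F R)) (t, y) := by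
    have s1 : Dv ((1:ℝ), (0 : Fin n → ℝ))
        (Dv ((0:ℝ), Pi.single i 1) (Dv ((0:ℝ), Pi.single j 1) (uu F))) (t, y)
        = Dv ((0:ℝ), Pi.single i 1)
            (Dv ((1:ℝ), (0 : Fin n → ℝ)) (Dv ((0:ℝ), Pi.single j 1) (uu F))) (t, y) :=
      Dv_comm hUo (Dv_contDiffOn hUo hu _) hp _ _
    have s2 : Dv ((0:ℝ), Pi.single i 1)
            (Dv ((1:ℝ), (0 : Fin n → ℝ)) (Dv ((0:ℝ), Pi.single j 1) (uu F))) (t, y)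
        = Dv ((0:ℝ), Pi.single i 1)
            (fun q => -2 * Dv ((0:ℝ), Pi.single j 1) (ww F R) q) (t, y) :=
      Dv_congr hUo (fun q hq => hDt1 q hq j) hp _
    have s3 : Dv ((0:ℝ), Pi.single i 1)
            (fun q => -2 * Dv ((0:ℝ), Pi.single j 1) (ww F R) q) (t, y)
        = -2 * Dv ((0:ℝ), Pi.single i 1) (Dv ((0:ℝ), Pi.single j 1) (ww F R)) (t, y) :=
      Dv_const_mul (Dv_diffAt hUo hw _ hp) _ _
    exact s1.trans (s2.trans s3)
  -- values of the tensors in terms of Dv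
  have hgTval : ∀ s ∈ Set.Ioo a b, gT (F s) i j y
      = (1 / 2 : ℝ) * Dv ((0:ℝ), Pi.single i 1) (Dv ((0:ℝ), Pi.single j 1) (uu F)) (s, y) :=
    fun s hs => congrArg (fun x => (1 / 2 : ℝ) * x)
      (pd_pd_slice hUo hu (Set.mem_prod.2 ⟨hs, hy⟩) i j)
  have hyLowval : ∀ (k : Fin n), ∀ s ∈ Set.Ioo a b, yLow (F s) k y
      = (1 / 2 : ℝ) * Dv ((0:ℝ), Pi.single k 1) (uu F) (s, y) :=
    fun k s hs => congrArg (fun x => (1 / 2 : ℝ) * x)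
      (pd_slice (diffAt_of_contDiffOn hUo hu (Set.mem_prod.2 ⟨hs, hy⟩)) k)
  have hRicval : RicT (F t) (R t) i j y
      = (1 / 2 : ℝ) * Dv ((0:ℝ), Pi.single i 1) (Dv ((0:ℝ), Pi.single j 1) (ww F R)) (t, y) :=
    congrArg (fun x => (1 / 2 : ℝ) * x) (pd_pd_slice hUo hw hp i j)
  -- Euler identity ingredients
  have hιc : ContDiff ℝ (⊤:ℕ∞) (fun z : Fin n → ℝ => ((t:ℝ), z)) :=
    contDiff_const.prodMk contDiff_id
  have hmaps : Set.MapsTo (fun z : Fin n → ℝ => ((t:ℝ), z)) {z : Fin n → ℝ | z ≠ 0}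
      ((Set.Ioo a b) ×ˢ {y : Fin n → ℝ | y ≠ 0}) :=
    fun z hz => Set.mem_prod.2 ⟨ht, hz⟩
  have hh : ContDiffOn ℝ (⊤:ℕ∞) (fun z => R t z * F t z ^ 2) {z : Fin n → ℝ | z ≠ 0} :=
    hw.comp hιc.contDiffOn hmaps
  have hom2 : ∀ z : Fin n → ℝ, z ≠ 0 → ∀ c : ℝ, 0 < c →
      (fun z => R t z * F t z ^ 2) (c • z) = c ^ 2 * ((fun z => R t z * F t z ^ 2) z) := by
    intro z hz c hc
    show R t (c • z) * F t (c • z) ^ 2 = c ^ 2 * (R t z * F t z ^ 2)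
    rw [hRhom t ht z hz c hc, (hMink t ht).2.2.1 z hz c hc]; ring
  have hSum : ∀ k : Fin n, (∑ m, RicT (F t) (R t) k m y * y m)
      = (1 / 2 : ℝ) * Dv ((0:ℝ), Pi.single k 1) (ww F R) (t, y) := by
    intro k
    have hstep : ∀ m : Fin n, RicT (F t) (R t) k m y
        = (1 / 2 : ℝ) * pd m (pd k (fun z => R t z * F t z ^ 2)) y := by
      intro m
      exact congrArg (fun x => (1 / 2 : ℝ) * x)
        (Dv_comm (f := fun z => R t z * F t z ^ 2) isOpen_ne hh hy
          (Pi.single k 1) (Pi.single m 1))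
    have heuler := euler_aux hh hom2 hy k
    have hpdk : pd k (fun z => R t z * F t z ^ 2) y
        = Dv ((0:ℝ), Pi.single k 1) (ww F R) (t, y) :=
      pd_slice (diffAt_of_contDiffOn hUo hw hp) k
    calc ∑ m, RicT (F t) (R t) k m y * y m
        = ∑ m, (1 / 2 : ℝ) * (pd m (pd k (fun z => R t z * F t z ^ 2)) y * y m) := by
          refine Finset.sum_congr rfl fun m _ => ?_
          rw [hstep m]; ring
      _ = (1 / 2 : ℝ) * ∑ m, pd m (pd k (fun z => R t z * F t z ^ 2)) y * y m := by
          rw [Finset.mul_sum]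
      _ = (1 / 2 : ℝ) * pd k (fun z => R t z * F t z ^ 2) y := by rw [heuler]
      _ = _ := by rw [hpdk]
  -- the big sum on the right-hand side
  have hSfinal : (∑ m, (RicT (F t) (R t) i m y * (yLow (F t) j y / F t y)
        + RicT (F t) (R t) j m y * (yLow (F t) i y / F t y)) * (y m / F t y))
      = ((yLow (F t) j y / F t y)
            * ((1 / 2 : ℝ) * Dv ((0:ℝ), Pi.single i 1) (ww F R) (t, y))
        + (yLow (F t) i y / F t y)
            * ((1 / 2 : ℝ) * Dv ((0:ℝ), Pi.single j 1) (ww F R) (t, y))) / F t y := by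
    have hterm : ∀ m : Fin n, (RicT (F t) (R t) i m y * (yLow (F t) j y / F t y)
          + RicT (F t) (R t) j m y * (yLow (F t) i y / F t y)) * (y m / F t y)
        = (yLow (F t) j y / F t y / F t y) * (RicT (F t) (R t) i m y * y m)
          + (yLow (F t) i y / F t y / F t y) * (RicT (F t) (R t) j m y * y m) := by
      intro m; ring
    rw [Finset.sum_congr rfl fun m _ => hterm m, Finset.sum_add_distrib,
      ← Finset.mul_sum, ← Finset.mul_sum, hSum i, hSum j]
    ring
  -- differentiate the model function
  have hpos : 0 < F t y := (hMink t ht).2.1 y hy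
  have hVne : uu F (t, y) ≠ 0 := pow_ne_zero 2 hpos.ne'
  have hA : HasDerivAt
      (fun s => Dv ((0:ℝ), Pi.single i 1) (Dv ((0:ℝ), Pi.single j 1) (uu F)) (s, y))
      (Dv ((1:ℝ), (0 : Fin n → ℝ))
        (Dv ((0:ℝ), Pi.single i 1) (Dv ((0:ℝ), Pi.single j 1) (uu F))) (t, y)) t :=
    slice_hasDerivAt (Dv_diffAt hUo (Dv_contDiffOn hUo hu _) _ hp)
  have hBi : HasDerivAt (fun s => Dv ((0:ℝ), Pi.single i 1) (uu F) (s, y))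
      (Dv ((1:ℝ), (0 : Fin n → ℝ)) (Dv ((0:ℝ), Pi.single i 1) (uu F)) (t, y)) t :=
    slice_hasDerivAt (Dv_diffAt hUo hu _ hp)
  have hBj : HasDerivAt (fun s => Dv ((0:ℝ), Pi.single j 1) (uu F) (s, y))
      (Dv ((1:ℝ), (0 : Fin n → ℝ)) (Dv ((0:ℝ), Pi.single j 1) (uu F)) (t, y)) t :=
    slice_hasDerivAt (Dv_diffAt hUo hu _ hp)
  have hV : HasDerivAt (fun s => uu F (s, y)) (Dv ((1:ℝ), (0 : Fin n → ℝ)) (uu F) (t, y)) t :=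
    slice_hasDerivAt (diffAt_of_contDiffOn hUo hu hp)
  have hModel := ((HasDerivAt.const_mul ((1:ℝ)/2) hA).sub
    (((HasDerivAt.const_mul ((1:ℝ)/2) hBi).mul (HasDerivAt.const_mul ((1:ℝ)/2) hBj)).div hV hVne))
  -- identify the left-hand side near t with the model function
  have hev : (fun s => angular (F s) i j y) =ᶠ[nhds t]
      (fun s => (1 / 2 : ℝ)
          * Dv ((0:ℝ), Pi.single i 1) (Dv ((0:ℝ), Pi.single j 1) (uu F)) (s, y)
        - ((1 / 2 : ℝ) * Dv ((0:ℝ), Pi.single i 1) (uu F) (s, y))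
            * ((1 / 2 : ℝ) * Dv ((0:ℝ), Pi.single j 1) (uu F) (s, y)) / uu F (s, y)) := by
    filter_upwards [isOpen_Ioo.mem_nhds ht] with s hs
    show gT (F s) i j y - yLow (F s) i y * yLow (F s) j y / F s y ^ 2 = _
    rw [hgTval s hs, hyLowval i s hs, hyLowval j s hs]
    rfl
  rw [hev.deriv_eq]; refine Eq.trans hModel.deriv ?_; simp only [Pi.mul_apply]
  -- rewrite time derivatives
  rw [hDt2, hDt1 (t, y) hp i, hDt1 (t, y) hp j, hkey (t, y) hp]
  -- rewrite the right-hand side tensors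
  have hang : angular (F t) i j y
      = (1 / 2 : ℝ) * Dv ((0:ℝ), Pi.single i 1) (Dv ((0:ℝ), Pi.single j 1) (uu F)) (t, y)
        - ((1 / 2 : ℝ) * Dv ((0:ℝ), Pi.single i 1) (uu F) (t, y))
            * ((1 / 2 : ℝ) * Dv ((0:ℝ), Pi.single j 1) (uu F) (t, y)) / F t y ^ 2 := by
    show gT (F t) i j y - yLow (F t) i y * yLow (F t) j y / F t y ^ 2 = _
    rw [hgTval t ht, hyLowval i t ht, hyLowval j t ht]
  rw [hang, hgTval t ht, hRicval, hSfinal, hyLowval i t ht, hyLowval j t ht]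
  rw [show uu F (t, y) = F t y ^ 2 from rfl, show ww F R (t, y) = R t y * F t y ^ 2 from rfl]
  field_simp
  ring
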